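/- Corollary (convergence to optimal input sets): Let 𝒮* be the collection of feasible sets of minimum cardinality. Then for every initial state S₀ ∈ 𝒱, lim_{T→0⁺} lim_{t→∞} Σ_{S ∈ 𝒮*} (P_T^t)(S₀, S) = 1; that is, for large time and small temperature the MCMC chain is, with probability approaching 1, at a minimum-cardinality feasible set. -/

import Mathlib

open Finset
open scoped Classical

/-- One-step forcing operator of the zero forcing process in a loop directed
graph with edge relation `E` (`E u v` means there is an edge from `u` to `v`,
i.e. `v` is an out-neighbor of `u`): to the black set `B` we add every white
vertex `v` that is the unique out-neighbor, not in `B`, of some vertex `u`. -/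
noncomputable def forceStep {V : Type*} [Fintype V] (E : V → V → Prop)
    (B : Finset V) : Finset V :=
  B ∪ univ.filter fun v => v ∉ B ∧ ∃ u, E u v ∧ ∀ w, E u w → w ∉ B → w = v

/-- The zero forcing closure of `S`: iterate the one-step forcing operator
`|V|` times. -/
noncomputable def zfClosure {V : Type*} [Fintype V] (E : V → V → Prop)
    (S : Finset V) : Finset V :=
  (forceStep E)^[Fintype.card V] S

/-- One-step forcing operator of the restricted zero forcing process:
a force `u → v` with `u = v` is forbidden whenever `forbid v` holds. -/
noncomputable def forceStepR {V : Type*} [Fintype V] (E : V → V → Prop)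
    (forbid : V → Prop) (B : Finset V) : Finset V :=
  B ∪ univ.filter fun v => v ∉ B ∧
    ∃ u, E u v ∧ (∀ w, E u w → w ∉ B → w = v) ∧ ¬(u = v ∧ forbid v)

/-- The restricted zero forcing closure. -/
noncomputable def zfClosureR {V : Type*} [Fintype V] (E : V → V → Prop)
    (forbid : V → Prop) (S : Finset V) : Finset V :=
  (forceStepR E forbid)^[Fintype.card V] S

/- For a pattern matrix `A ∈ {0,×}^{n×n}`, modelled as `A : Fin n → Fin n → Prop`
with `A i j` meaning `A_{ij} = ×`, the graph `G(A)` has an edge `(x_j, x_i)` iff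
`A i j = ×`, i.e. its edge relation is `fun u v => A v u`.  The modified pattern
`A_×` replaces every zero diagonal entry of `A` by `×`, so the edge relation of
`G(A_×)` is `fun u v => A v u ∨ u = v`, and in `G(A_×)` self-forces `x → x` are
forbidden at every vertex `x` with `A x x = ×`. -/

/-- The stalled white set `W(S)` of the zero forcing process in `G(A)`. -/
noncomputable def WA {n : ℕ} (A : Fin n → Fin n → Prop) (S : Finset (Fin n)) :
    Finset (Fin n) :=
  (zfClosure (fun u v => A v u) S)ᶜ

/-- The stalled white set `W_×(S)` of the restricted zero forcing process in
`G(A_×)`. -/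
noncomputable def Wx {n : ℕ} (A : Fin n → Fin n → Prop) (S : Finset (Fin n)) :
    Finset (Fin n) :=
  (zfClosureR (fun u v => A v u ∨ u = v) (fun v => A v v) S)ᶜ

/-- `S` is feasible if the zero forcing process from `S` in `G(A)` and the
restricted zero forcing process from `S` in `G(A_×)` both colour every vertex
black. -/
def Feasible {n : ℕ} (A : Fin n → Fin n → Prop) (S : Finset (Fin n)) : Prop :=
  WA A S = ∅ ∧ Wx A S = ∅

/-- The cost function `C(S) = |S| + (1+ε)·|W(S) ∪ W_×(S)|`. -/
noncomputable def zcost {n : ℕ} (A : Fin n → Fin n → Prop) (ε : ℝ)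
    (S : Finset (Fin n)) : ℝ :=
  (S.card : ℝ) + (1 + ε) * ((WA A S ∪ Wx A S).card : ℝ)

variable {V : Type*} [Fintype V] [DecidableEq V]

/-- The collection of sets obtained from `S` by adding one new vertex. -/
def N1 (S : Finset V) : Finset (Finset V) := Sᶜ.image fun x => insert x S

/-- The collection of sets obtained from `S` by removing one vertex. -/
def N2 (S : Finset V) : Finset (Finset V) := S.image fun x => S.erase x

/-- The collection of sets obtained from `S` by swapping one vertex of `S`
with one vertex outside `S`. -/
def N3 (S : Finset V) : Finset (Finset V) :=
  (Sᶜ ×ˢ S).image fun p => (insert p.1 S).erase p.2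

/-- Off-diagonal transition probabilities of the Metropolis chain. -/
noncomputable def Poff (C : Finset V → ℝ) (T : ℝ) (S S' : Finset V) : ℝ :=
  if S' ∈ N1 S ∪ N2 S then
    (2 / (3 * (Fintype.card V : ℝ))) * min (Real.exp ((C S - C S') / T)) 1
  else if S' ∈ N3 S then
    (1 / (3 * (S.card : ℝ) * ((Fintype.card V : ℝ) - (S.card : ℝ)))) *
      min (Real.exp ((C S - C S') / T)) 1
  else 0

/-- The transition matrix `P_T` of the Metropolis chain: off the diagonal it is
given by `Poff`, and the diagonal entry is `1` minus the sum of the off-diagonal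
entries in the row. -/
noncomputable def Ptrans (C : Finset V → ℝ) (T : ℝ) (S S' : Finset V) : ℝ :=
  if S' = S then 1 - ∑ S'' ∈ univ.erase S, Poff C T S S''
  else Poff C T S S'

/-- The Gibbs distribution at temperature `T` for the cost function `C`. -/
noncomputable def gibbs (C : Finset V → ℝ) (T : ℝ) (S : Finset V) : ℝ :=
  Real.exp (-C S / T) / ∑ S₁ : Finset V, Real.exp (-C S₁ / T)


/-!
The Metropolis matrix `P_T` is row stochastic and satisfies detailed balance with respect to the
Gibbs distribution `π_T ∝ exp (-C / T)`, which is therefore stationary. Every set can be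
emptied one vertex at a time and built up again from `∅`, and `P_T(∅, ∅) ≥ 1/3`, so all entries
of `P_T ^ (2n + 1)` are positive. Doeblin's argument (the oscillation of `P_T ^ t f` contracts by
a fixed factor every `2n + 1` steps) then gives `P_T ^ t (S₀, S) → π_T S` as `t → ∞`.

As `T → 0⁺`, `π_T` concentrates on the minimisers of `C`. For `ε > 0` these are exactly the
feasible sets of minimum cardinality: adding `W = W(S) ∪ W_×(S)` to an infeasible `S` makes it
feasible and costs at most `|W|`, strictly less than the penalty `(1 + ε)·|W|`.
-/

open Filter Topology Matrix

section Oscillation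

variable {X : Type*} [Fintype X] [Nonempty X]

noncomputable def osc (g : X → ℝ) : ℝ :=
  univ.sup' univ_nonempty g - univ.inf' univ_nonempty g

lemma sub_le_osc (g : X → ℝ) (x y : X) : g x - g y ≤ osc g :=
  sub_le_sub (le_sup' g (mem_univ x)) (inf'_le g (mem_univ y))

lemma osc_nonneg (g : X → ℝ) : 0 ≤ osc g := by
  simpa using sub_le_osc g (Classical.arbitrary X) (Classical.arbitrary X)

end Oscillation

section Doeblin

variable {X : Type*} [Fintype X] [DecidableEq X]

lemma pow_add_apply_pos {P : Matrix X X ℝ} (hP : P ∈ rowStochastic ℝ X) {s t : ℕ} {a b c : X}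
    (hab : 0 < (P ^ s) a b) (hbc : 0 < (P ^ t) b c) : 0 < (P ^ (s + t)) a c := by
  rw [pow_add, mul_apply]
  exact (mul_pos hab hbc).trans_le <| single_le_sum
    (fun z _ => mul_nonneg ((pow_mem hP s).1 a z) ((pow_mem hP t).1 z c)) (mem_univ b)

lemma vecMul_pow_eq_self {P : Matrix X X ℝ} {π : X → ℝ} (hπ : π ᵥ* P = π) (t : ℕ) :
    π ᵥ* (P ^ t) = π := by
  induction t with
  | zero => simp
  | succ t ih => rw [pow_succ, ← vecMul_vecMul, ih, hπ]

lemma card_mul_le_one {Q : Matrix X X ℝ} (hQ : Q ∈ rowStochastic ℝ X) {δ : ℝ} (x : X)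
    (hδ : ∀ y, δ ≤ Q x y) : Fintype.card X * δ ≤ 1 := by
  simpa [← sum_row_of_mem_rowStochastic hQ x] using sum_le_sum fun y (_ : y ∈ univ) => hδ y

variable [Nonempty X]

lemma osc_mulVec_le {Q : Matrix X X ℝ} (hQ : Q ∈ rowStochastic ℝ X) {δ : ℝ}
    (hδ : ∀ x y, δ ≤ Q x y) (g : X → ℝ) :
    osc (Q *ᵥ g) ≤ (1 - Fintype.card X * δ) * osc g := by
  obtain ⟨x, -, hx⟩ := exists_mem_eq_sup' univ_nonempty (Q *ᵥ g)
  obtain ⟨y, -, hy⟩ := exists_mem_eq_inf' univ_nonempty (Q *ᵥ g)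
  have hrow : ∀ w, ∑ z, (Q w z - δ) = 1 - Fintype.card X * δ := fun w => by
    simp [sum_sub_distrib, sum_row_of_mem_rowStochastic hQ w]
  -- subtracting the common mass `δ` from both rows leaves `1 - |X| δ` to move the value
  have hsplit : ∀ w, (Q *ᵥ g) w = ∑ z, (Q w z - δ) * g z + δ * ∑ z, g z := fun w => by
    simp [mulVec, dotProduct, sub_mul, sum_sub_distrib, mul_sum]
  have hupper : ∑ z, (Q x z - δ) * g z ≤ (1 - Fintype.card X * δ) * univ.sup' univ_nonempty g := by
    rw [← hrow x, sum_mul]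
    exact sum_le_sum fun z _ =>
      mul_le_mul_of_nonneg_left (le_sup' g (mem_univ z)) (sub_nonneg.2 (hδ x z))
  have hlower : (1 - Fintype.card X * δ) * univ.inf' univ_nonempty g ≤ ∑ z, (Q y z - δ) * g z := by
    rw [← hrow y, sum_mul]
    exact sum_le_sum fun z _ =>
      mul_le_mul_of_nonneg_left (inf'_le g (mem_univ z)) (sub_nonneg.2 (hδ y z))
  rw [osc, hx, hy, hsplit, hsplit, osc, mul_sub]
  linarith

lemma tendsto_osc_pow_mulVec {P : Matrix X X ℝ} (hP : P ∈ rowStochastic ℝ X) {s : ℕ}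
    (hs : 0 < s) (hpos : ∀ x y, 0 < (P ^ s) x y) (g : X → ℝ) :
    Tendsto (fun t => osc ((P ^ t) *ᵥ g)) atTop (𝓝 0) := by
  obtain ⟨p, hp⟩ := Finite.exists_min fun p : X × X => (P ^ s) p.1 p.2
  set r := 1 - Fintype.card X * (P ^ s) p.1 p.2
  have hr0 : 0 ≤ r := sub_nonneg.2 <| card_mul_le_one (pow_mem hP s) p.1 fun y => hp (p.1, y)
  have hr1 : r < 1 := sub_lt_self _ <| mul_pos (by exact_mod_cast Fintype.card_pos) (hpos _ _)
  have hanti : Antitone fun t => osc ((P ^ t) *ᵥ g) := antitone_nat_of_succ_le fun t => by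
    simpa [pow_succ', ← mulVec_mulVec] using osc_mulVec_le hP (δ := 0) (fun x y => hP.1 x y) _
  have hgeom : ∀ k, osc ((P ^ (s * k)) *ᵥ g) ≤ r ^ k * osc g := by
    intro k
    induction k with
    | zero => simp
    | succ k ih =>
      calc osc ((P ^ (s * (k + 1))) *ᵥ g) = osc ((P ^ s) *ᵥ ((P ^ (s * k)) *ᵥ g)) := by
            rw [mulVec_mulVec, ← pow_add, mul_add_one, add_comm]
        _ ≤ r * osc ((P ^ (s * k)) *ᵥ g) := osc_mulVec_le (pow_mem hP s) (fun x y => hp (x, y)) _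
        _ ≤ r ^ (k + 1) * osc g := by
            rw [pow_succ', mul_assoc]; exact mul_le_mul_of_nonneg_left ih hr0
  have hlim : Tendsto (fun t => r ^ (t / s) * osc g) atTop (𝓝 0) := by
    simpa using ((tendsto_pow_atTop_nhds_zero_of_lt_one hr0 hr1).comp
      (Nat.tendsto_div_const_atTop hs.ne')).mul_const (osc g)
  exact squeeze_zero (fun t => osc_nonneg _)
    (fun t => (hanti (Nat.mul_div_le t s)).trans (hgeom (t / s))) hlim

theorem tendsto_pow_apply_of_vecMul_eq_self {P : Matrix X X ℝ} (hP : P ∈ rowStochastic ℝ X)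
    {s : ℕ} (hs : 0 < s) (hpos : ∀ x y, 0 < (P ^ s) x y) {π : X → ℝ} (hπ : π ᵥ* P = π)
    (hπ1 : ∑ x, π x = 1) (x y : X) :
    Tendsto (fun t => (P ^ t) x y) atTop (𝓝 (π y)) := by
  set g : ℕ → X → ℝ := fun t => (P ^ t) *ᵥ Pi.single y 1
  have hg : ∀ t z, g t z = (P ^ t) z y := fun t z => by simp [g]
  have hdev : ∀ t, (P ^ t) x y - π y = ∑ z, π z * (g t x - g t z) := fun t => by
    have hinv : π ⬝ᵥ g t = π y := by
      rw [dotProduct_mulVec, vecMul_pow_eq_self hπ, dotProduct_single_one]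
    rw [← hinv]
    simp only [dotProduct, mul_sub, sum_sub_distrib, ← sum_mul, hπ1, one_mul, hg]
  have hterm : ∀ z, Tendsto (fun t => g t x - g t z) atTop (𝓝 0) := fun z =>
    squeeze_zero_norm (fun t => abs_sub_le_iff.2 ⟨sub_le_osc _ x z, sub_le_osc _ z x⟩)
      (tendsto_osc_pow_mulVec hP hs hpos _)
  have := tendsto_finsetSum univ fun z (_ : z ∈ univ) => (hterm z).const_mul (π z)
  simp only [mul_zero, sum_const_zero, ← hdev] at this
  exact tendsto_sub_nhds_zero_iff.1 this

end Doeblin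

section Gibbs

variable {α : Type*} [Fintype α]

lemma gibbs_sum_one (C : Finset α → ℝ) (T : ℝ) : ∑ S, gibbs C T S = 1 := by
  simp only [gibbs, ← sum_div]
  exact div_self (sum_pos (fun S _ => Real.exp_pos _) univ_nonempty).ne'

lemma gibbs_le_exp_sub (C : Finset α → ℝ) (T : ℝ) (S S' : Finset α) :
    gibbs C T S ≤ Real.exp ((C S' - C S) / T) := by
  have hZ : Real.exp (-C S' / T) ≤ ∑ S₁, Real.exp (-C S₁ / T) :=
    single_le_sum (f := fun S₁ => Real.exp (-C S₁ / T)) (fun S₁ _ => (Real.exp_pos _).le)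
      (mem_univ S')
  calc gibbs C T S ≤ Real.exp (-C S / T) / Real.exp (-C S' / T) :=
        div_le_div_of_nonneg_left (Real.exp_pos _).le (Real.exp_pos _) hZ
    _ = Real.exp ((C S' - C S) / T) := by rw [← Real.exp_sub]; ring_nf

lemma tendsto_gibbs_of_lt {C : Finset α → ℝ} {S S' : Finset α} (h : C S' < C S) :
    Tendsto (fun T => gibbs C T S) (𝓝[>] 0) (𝓝 0) := by
  have hexp : Tendsto (fun T => Real.exp ((C S' - C S) / T)) (𝓝[>] 0) (𝓝 0) := by
    refine Real.tendsto_exp_atBot.comp ?_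
    exact ((tendsto_const_mul_atBot_of_neg (sub_neg.2 h)).2 tendsto_inv_nhdsGT_zero).congr
      fun T => (div_eq_mul_inv _ _).symm
  exact squeeze_zero (fun T => div_nonneg (Real.exp_pos _).le
    (sum_nonneg fun _ _ => (Real.exp_pos _).le)) (fun T => gibbs_le_exp_sub C T S S') hexp

lemma tendsto_sum_gibbs_argmin (C : Finset α → ℝ) :
    Tendsto (fun T => ∑ S ∈ univ.filter fun S => ∀ S', C S ≤ C S', gibbs C T S)
      (𝓝[>] 0) (𝓝 1) := by
  set M := univ.filter fun S => ∀ S', C S ≤ C S'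
  have hrest : Tendsto (fun T => ∑ S ∈ Mᶜ, gibbs C T S) (𝓝[>] 0) (𝓝 0) := by
    have := tendsto_finsetSum Mᶜ fun S hS => by
      obtain ⟨S', hS'⟩ : ∃ S', C S' < C S := by simpa [M] using hS
      exact tendsto_gibbs_of_lt hS'
    rwa [sum_const_zero] at this
  have hsplit : ∀ T, ∑ S ∈ M, gibbs C T S = 1 - ∑ S ∈ Mᶜ, gibbs C T S := fun T => by
    rw [← gibbs_sum_one C T, ← sum_add_sum_compl M, add_sub_cancel_right]
  simpa [hsplit] using hrest.const_sub 1

end Gibbs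

section Metropolis

lemma mem_N1_iff_mem_N2 {S S' : Finset V} : S' ∈ N1 S ↔ S ∈ N2 S' := by
  simp only [N1, N2, mem_image, mem_compl]
  constructor
  · rintro ⟨x, hx, rfl⟩
    exact ⟨x, mem_insert_self x S, erase_insert hx⟩
  · rintro ⟨x, hx, rfl⟩
    exact ⟨x, notMem_erase x S', insert_erase hx⟩

lemma mem_N3 {S S' : Finset V} :
    S' ∈ N3 S ↔ ∃ a b, a ∉ S ∧ b ∈ S ∧ (insert a S).erase b = S' := by
  simp [N3, and_assoc]

lemma card_of_mem_N3 {S S' : Finset V} (h : S' ∈ N3 S) : S'.card = S.card := by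
  obtain ⟨a, b, ha, hb, rfl⟩ := mem_N3.1 h
  rw [card_erase_of_mem (mem_insert_of_mem hb), card_insert_of_notMem ha, Nat.add_sub_cancel]

lemma mem_N3_comm {S S' : Finset V} : S' ∈ N3 S ↔ S ∈ N3 S' := by
  suffices ∀ S S' : Finset V, S' ∈ N3 S → S ∈ N3 S' from ⟨this S S', this S' S⟩
  intro S S' h
  obtain ⟨a, b, ha, hb, rfl⟩ := mem_N3.1 h
  have hab : a ≠ b := by rintro rfl; exact ha hb
  refine mem_N3.2 ⟨b, a, by simp, mem_erase.2 ⟨hab, mem_insert_self a S⟩, ?_⟩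
  rw [insert_erase (mem_insert_of_mem hb), erase_insert ha]

noncomputable def proposal (S S' : Finset V) : ℝ :=
  if S' ∈ N1 S ∪ N2 S then 2 / (3 * (Fintype.card V : ℝ))
  else if S' ∈ N3 S then 1 / (3 * (S.card : ℝ) * ((Fintype.card V : ℝ) - (S.card : ℝ)))
  else 0

lemma Poff_eq_proposal_mul (C : Finset V → ℝ) (T : ℝ) (S S' : Finset V) :
    Poff C T S S' = proposal S S' * min (Real.exp ((C S - C S') / T)) 1 := by
  unfold Poff proposal
  split_ifs <;> simp

lemma proposal_comm (S S' : Finset V) : proposal S S' = proposal S' S := by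
  have h12 : S' ∈ N1 S ∪ N2 S ↔ S ∈ N1 S' ∪ N2 S' := by
    rw [mem_union, mem_union, mem_N1_iff_mem_N2 (S := S) (S' := S'),
      ← mem_N1_iff_mem_N2 (S := S') (S' := S), or_comm]
  unfold proposal
  by_cases h : S' ∈ N1 S ∪ N2 S
  · rw [if_pos h, if_pos (h12.1 h)]
  rw [if_neg h, if_neg (mt h12.2 h)]
  by_cases h3 : S' ∈ N3 S
  · rw [if_pos h3, if_pos (mem_N3_comm.1 h3), card_of_mem_N3 h3]
  · rw [if_neg h3, if_neg (mt mem_N3_comm.2 h3)]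

lemma proposal_nonneg (S S' : Finset V) : 0 ≤ proposal S S' := by
  have : (S.card : ℝ) ≤ Fintype.card V := by exact_mod_cast card_le_univ S
  unfold proposal
  split_ifs
  · positivity
  · exact one_div_nonneg.2 (mul_nonneg (by positivity) (by linarith))
  · rfl

lemma card_N1_union_N2_le (S : Finset V) : ((N1 S ∪ N2 S).card : ℝ) ≤ Fintype.card V := by
  have : (N1 S ∪ N2 S).card ≤ Sᶜ.card + S.card :=
    (card_union_le _ _).trans (add_le_add card_image_le card_image_le)
  rw [card_compl_add_card] at this
  exact_mod_cast this

lemma card_N3_le (S : Finset V) :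
    ((N3 S).card : ℝ) ≤ S.card * ((Fintype.card V : ℝ) - S.card) := by
  have : (N3 S).card ≤ Sᶜ.card * S.card := card_image_le.trans (card_product _ _).le
  rw [card_compl, mul_comm] at this
  rw [← Nat.cast_sub (card_le_univ S)]
  exact_mod_cast this

lemma N3_empty : N3 (∅ : Finset V) = ∅ := by
  simp [N3]

lemma sum_proposal_le (S : Finset V) :
    ∑ S', proposal S S' ≤
      2 / 3 + 1 / 3 * ((N3 S).card / (S.card * ((Fintype.card V : ℝ) - S.card))) := by
  set a : ℝ := 2 / (3 * (Fintype.card V : ℝ))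
  set c : ℝ := 1 / (3 * (S.card : ℝ) * ((Fintype.card V : ℝ) - (S.card : ℝ)))
  have hc : 0 ≤ c := by
    have : (S.card : ℝ) ≤ Fintype.card V := by exact_mod_cast card_le_univ S
    exact one_div_nonneg.2 (mul_nonneg (by positivity) (by linarith))
  have hle : ∀ S', proposal S S' ≤
      (if S' ∈ N1 S ∪ N2 S then a else 0) + if S' ∈ N3 S then c else 0 := fun S' => by
    unfold proposal
    split_ifs <;> first
      | exact le_add_of_nonneg_right hc | exact (add_zero _).ge | exact (zero_add _).ge
  have ha : ((N1 S ∪ N2 S).card : ℝ) * a ≤ 2 / 3 := by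
    rw [show ((N1 S ∪ N2 S).card : ℝ) * a = 2 / 3 * ((N1 S ∪ N2 S).card / Fintype.card V) by
      simp only [a]; ring]
    exact mul_le_of_le_one_right (by norm_num)
      (div_le_one_of_le₀ (card_N1_union_N2_le S) (Nat.cast_nonneg _))
  calc ∑ S', proposal S S'
      ≤ ∑ S', ((if S' ∈ N1 S ∪ N2 S then a else 0) + if S' ∈ N3 S then c else 0) :=
        sum_le_sum fun S' _ => hle S'
    _ = ((N1 S ∪ N2 S).card : ℝ) * a + (N3 S).card * c := by
        rw [sum_add_distrib, sum_ite_mem, sum_ite_mem, univ_inter, univ_inter, sum_const,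
          sum_const, nsmul_eq_mul, nsmul_eq_mul]
    _ ≤ _ := by
        rw [show ((N3 S).card : ℝ) * c =
          1 / 3 * ((N3 S).card / (S.card * ((Fintype.card V : ℝ) - S.card))) by
            simp only [c]; field_simp]
        linarith

lemma sum_proposal_le_one (S : Finset V) : ∑ S', proposal S S' ≤ 1 := by
  have : ((N3 S).card : ℝ) / (S.card * ((Fintype.card V : ℝ) - S.card)) ≤ 1 :=
    div_le_one_of_le₀ (card_N3_le S)
      (mul_nonneg (Nat.cast_nonneg _) (sub_nonneg.2 (by exact_mod_cast card_le_univ S)))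
  linarith [sum_proposal_le S]

lemma sum_proposal_empty_le : ∑ S', proposal (∅ : Finset V) S' ≤ 2 / 3 := by
  simpa [N3_empty] using sum_proposal_le (∅ : Finset V)

lemma Ptrans_of_ne (C : Finset V → ℝ) (T : ℝ) {S S' : Finset V} (h : S' ≠ S) :
    Ptrans C T S S' = Poff C T S S' :=
  if_neg h

noncomputable def metropolis (C : Finset V → ℝ) (T : ℝ) : Matrix (Finset V) (Finset V) ℝ :=
  Matrix.of fun S₁ S₂ => Ptrans C T S₁ S₂

lemma sum_Poff_le_sum_proposal (C : Finset V → ℝ) (T : ℝ) (S : Finset V) :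
    ∑ S' ∈ univ.erase S, Poff C T S S' ≤ ∑ S', proposal S S' :=
  calc ∑ S' ∈ univ.erase S, Poff C T S S' ≤ ∑ S' ∈ univ.erase S, proposal S S' :=
        sum_le_sum fun S' _ => by
          rw [Poff_eq_proposal_mul]
          exact mul_le_of_le_one_right (proposal_nonneg S S') (min_le_right _ _)
    _ ≤ ∑ S', proposal S S' :=
        sum_le_sum_of_subset_of_nonneg (erase_subset _ _) fun S' _ _ => proposal_nonneg S S'

lemma metropolis_mem_rowStochastic (C : Finset V → ℝ) (T : ℝ) :
    metropolis C T ∈ rowStochastic ℝ (Finset V) := by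
  refine mem_rowStochastic_iff_sum.2 ⟨fun S S' => ?_, fun S => ?_⟩
  · simp only [metropolis, of_apply, Ptrans]
    split_ifs
    · linarith [sum_Poff_le_sum_proposal C T S, sum_proposal_le_one S]
    · rw [Poff_eq_proposal_mul]
      exact mul_nonneg (proposal_nonneg S S') (le_min (Real.exp_pos _).le zero_le_one)
  · simp only [metropolis, of_apply]
    rw [← add_sum_erase univ _ (mem_univ S), Ptrans, if_pos rfl,
      sum_congr rfl fun S' hS' => Ptrans_of_ne C T (ne_of_mem_erase hS')]
    ring

lemma metropolis_pos_of_proposal_pos (C : Finset V → ℝ) (T : ℝ) {S S' : Finset V}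
    (hne : S' ≠ S) (h : 0 < proposal S S') : 0 < metropolis C T S S' := by
  rw [metropolis, of_apply, Ptrans_of_ne C T hne, Poff_eq_proposal_mul]
  exact mul_pos h (lt_min (Real.exp_pos _) one_pos)

lemma proposal_insert_pos {S : Finset V} {x : V} (hx : x ∉ S) : 0 < proposal S (insert x S) := by
  have : 0 < (Fintype.card V : ℝ) := by exact_mod_cast Fintype.card_pos_iff.2 ⟨x⟩
  have hN1 : insert x S ∈ N1 S := mem_image_of_mem _ (mem_compl.2 hx)
  rw [proposal, if_pos (mem_union_left _ hN1)]
  positivity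

lemma metropolis_empty_empty_pos (C : Finset V → ℝ) (T : ℝ) : 0 < metropolis C T ∅ ∅ := by
  rw [metropolis, of_apply, Ptrans, if_pos rfl]
  linarith [sum_Poff_le_sum_proposal C T ∅, sum_proposal_empty_le (V := V)]

lemma metropolis_pow_card_pos_to_empty (C : Finset V → ℝ) (T : ℝ) (S : Finset V) :
    0 < (metropolis C T ^ S.card) S ∅ := by
  induction S using Finset.induction_on with
  | empty => simp
  | insert x S hx ih =>
    rw [card_insert_of_notMem hx, add_comm]
    refine pow_add_apply_pos (metropolis_mem_rowStochastic C T) ?_ ih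
    rw [pow_one]
    exact metropolis_pos_of_proposal_pos C T (insert_ne_self.2 hx).symm
      (proposal_comm S _ ▸ proposal_insert_pos hx)

lemma metropolis_pow_card_pos_from_empty (C : Finset V → ℝ) (T : ℝ) (S : Finset V) :
    0 < (metropolis C T ^ S.card) ∅ S := by
  induction S using Finset.induction_on with
  | empty => simp
  | insert x S hx ih =>
    rw [card_insert_of_notMem hx]
    refine pow_add_apply_pos (metropolis_mem_rowStochastic C T) ih ?_
    rw [pow_one]
    exact metropolis_pos_of_proposal_pos C T (insert_ne_self.2 hx) (proposal_insert_pos hx)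

lemma metropolis_pow_empty_empty_pos (C : Finset V → ℝ) (T : ℝ) (k : ℕ) :
    0 < (metropolis C T ^ k) ∅ ∅ := by
  induction k with
  | zero => simp
  | succ k ih =>
    exact pow_add_apply_pos (metropolis_mem_rowStochastic C T) ih
      (by rw [pow_one]; exact metropolis_empty_empty_pos C T)

lemma metropolis_pow_pos (C : Finset V → ℝ) (T : ℝ) (S S' : Finset V) :
    0 < (metropolis C T ^ (2 * Fintype.card V + 1)) S S' := by
  have hP := metropolis_mem_rowStochastic C T
  obtain ⟨k, hk⟩ : ∃ k, 2 * Fintype.card V + 1 = S.card + k + S'.card :=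
    ⟨2 * Fintype.card V + 1 - S.card - S'.card, by
      have := card_le_univ S; have := card_le_univ S'; omega⟩
  rw [hk]
  exact pow_add_apply_pos hP (pow_add_apply_pos hP (metropolis_pow_card_pos_to_empty C T S)
    (metropolis_pow_empty_empty_pos C T k)) (metropolis_pow_card_pos_from_empty C T S')

lemma exp_mul_min_exp_comm (c c' T : ℝ) :
    Real.exp (-c / T) * min (Real.exp ((c - c') / T)) 1 =
      Real.exp (-c' / T) * min (Real.exp ((c' - c) / T)) 1 := by
  have key : ∀ a b : ℝ, Real.exp (-a / T) * min (Real.exp ((a - b) / T)) 1 =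
      min (Real.exp (-b / T)) (Real.exp (-a / T)) := fun a b => by
    rw [mul_min_of_nonneg _ _ (Real.exp_pos _).le, mul_one, ← Real.exp_add]
    ring_nf
  rw [key, key, min_comm]

lemma gibbs_mul_metropolis_comm (C : Finset V → ℝ) (T : ℝ) (S S' : Finset V) :
    gibbs C T S * metropolis C T S S' = gibbs C T S' * metropolis C T S' S := by
  rcases eq_or_ne S' S with rfl | hne
  · rfl
  simp only [metropolis, of_apply, Ptrans_of_ne C T hne, Ptrans_of_ne C T hne.symm,
    Poff_eq_proposal_mul, gibbs, proposal_comm S' S]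
  linear_combination (proposal S S' / ∑ S₁, Real.exp (-C S₁ / T)) *
    exp_mul_min_exp_comm (C S) (C S') T

lemma gibbs_vecMul_metropolis (C : Finset V → ℝ) (T : ℝ) :
    gibbs C T ᵥ* metropolis C T = gibbs C T := by
  funext S'
  calc (gibbs C T ᵥ* metropolis C T) S' = ∑ S, gibbs C T S' * metropolis C T S' S :=
        sum_congr rfl fun S _ => gibbs_mul_metropolis_comm C T S S'
    _ = gibbs C T S' := by
        rw [← mul_sum, sum_row_of_mem_rowStochastic (metropolis_mem_rowStochastic C T), mul_one]

lemma tendsto_metropolis_pow_apply (C : Finset V → ℝ) (T : ℝ) (S S' : Finset V) :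
    Tendsto (fun t => (metropolis C T ^ t) S S') atTop (𝓝 (gibbs C T S')) :=
  tendsto_pow_apply_of_vecMul_eq_self (metropolis_mem_rowStochastic C T) (Nat.succ_pos _)
    (metropolis_pow_pos C T) (gibbs_vecMul_metropolis C T) (gibbs_sum_one C T) S S'

end Metropolis

section ZeroForcing

variable {α : Type*} [Fintype α] (E : α → α → Prop)

lemma forceStepR_monotone (forbid : α → Prop) : Monotone (forceStepR E forbid) := by
  intro B B' h v hv
  simp only [forceStepR, mem_union, mem_filter, mem_univ, true_and] at hv ⊢
  by_cases hv' : v ∈ B'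
  · exact .inl hv'
  rcases hv with hv | ⟨-, u, huv, hu, hforbid⟩
  · exact .inl (h hv)
  · exact .inr ⟨hv', u, huv, fun w hw hwB' => hu w hw fun hwB => hwB' (h hwB), hforbid⟩

lemma id_le_forceStepR (forbid : α → Prop) : id ≤ forceStepR E forbid :=
  fun _ => subset_union_left

lemma zfClosure_eq_zfClosureR : zfClosure E = zfClosureR E fun _ => False := by
  have : forceStep E = forceStepR E fun _ => False := by
    funext B
    simp [forceStep, forceStepR]
  funext S
  rw [zfClosure, zfClosureR, this]

lemma zfClosureR_union_eq_univ [DecidableEq α] (forbid : α → Prop) {S U : Finset α}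
    (hU : (zfClosureR E forbid S)ᶜ ⊆ U) : zfClosureR E forbid (S ∪ U) = univ := by
  have hmono := (forceStepR_monotone E forbid).iterate (Fintype.card α)
  have hext := Function.id_le_iterate_of_id_le (id_le_forceStepR E forbid) (Fintype.card α)
  refine eq_univ_of_forall fun v => ?_
  by_cases hv : v ∈ zfClosureR E forbid S
  · exact hmono subset_union_left hv
  · exact hext (S ∪ U) (mem_union_right S (hU (mem_compl.2 hv)))

end ZeroForcing

section Feasibility

variable {n : ℕ} (A : Fin n → Fin n → Prop)

lemma feasible_union_W (S : Finset (Fin n)) : Feasible A (S ∪ (WA A S ∪ Wx A S)) := by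
  constructor
  · rw [WA, Finset.compl_eq_empty_iff, zfClosure_eq_zfClosureR]
    refine zfClosureR_union_eq_univ _ _ ?_
    rw [← zfClosure_eq_zfClosureR (fun u v => A v u)]
    exact subset_union_left
  · rw [Wx, Finset.compl_eq_empty_iff]
    refine zfClosureR_union_eq_univ _ _ ?_
    exact subset_union_right

lemma zcost_of_feasible (ε : ℝ) {S : Finset (Fin n)} (h : Feasible A S) :
    zcost A ε S = S.card := by
  simp [zcost, h.1, h.2]

lemma zcost_union_W_lt {ε : ℝ} (hε : 0 < ε) {S : Finset (Fin n)} (h : ¬Feasible A S) :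
    zcost A ε (S ∪ (WA A S ∪ Wx A S)) < zcost A ε S := by
  set W := WA A S ∪ Wx A S
  have hW : (1 : ℝ) ≤ W.card := by
    have : W ≠ ∅ := fun hW => h (union_eq_empty.1 hW)
    exact_mod_cast card_pos.2 (nonempty_iff_ne_empty.2 this)
  have hunion : ((S ∪ W).card : ℝ) ≤ S.card + W.card := by exact_mod_cast card_union_le S W
  rw [zcost_of_feasible A ε (feasible_union_W A S), zcost]
  nlinarith

noncomputable def minCardFeasible : Finset (Finset (Fin n)) :=
  univ.filter fun S => Feasible A S ∧ ∀ S' : Finset (Fin n), Feasible A S' → S.card ≤ S'.card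

lemma minCardFeasible_eq_argmin_zcost {ε : ℝ} (hε : 0 < ε) :
    minCardFeasible A = univ.filter fun S => ∀ S', zcost A ε S ≤ zcost A ε S' := by
  ext S
  simp only [minCardFeasible, mem_filter, mem_univ, true_and]
  constructor
  · rintro ⟨hS, hmin⟩ S'
    rw [zcost_of_feasible A ε hS]
    by_cases hS' : Feasible A S'
    · rw [zcost_of_feasible A ε hS']
      exact_mod_cast hmin S' hS'
    · calc (S.card : ℝ) ≤ (S' ∪ (WA A S' ∪ Wx A S')).card := by
            exact_mod_cast hmin _ (feasible_union_W A S')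
        _ = zcost A ε (S' ∪ (WA A S' ∪ Wx A S')) :=
            (zcost_of_feasible A ε (feasible_union_W A S')).symm
        _ ≤ zcost A ε S' := (zcost_union_W_lt A hε hS').le
  · intro hS
    have hfeas : Feasible A S := by
      by_contra h
      exact (zcost_union_W_lt A hε h).not_ge (hS _)
    refine ⟨hfeas, fun S' hS' => ?_⟩
    have := hS S'
    rwa [zcost_of_feasible A ε hfeas, zcost_of_feasible A ε hS', Nat.cast_le] at this

end Feasibility

theorem mcmc_converges_to_optimal_general {n : ℕ} (A : Fin n → Fin n → Prop)
    (ε : ℝ) (hε : 0 < ε) (S₀ : Finset (Fin n)) :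
    ∃ L : ℝ → ℝ,
      (∀ T : ℝ, 0 < T →
        Filter.Tendsto
          (fun t : ℕ =>
            ∑ S ∈ univ.filter (fun S : Finset (Fin n) =>
                Feasible A S ∧ ∀ S' : Finset (Fin n), Feasible A S' → S.card ≤ S'.card),
              (((Matrix.of fun S₁ S₂ => Ptrans (zcost A ε) T S₁ S₂) :
                Matrix (Finset (Fin n)) (Finset (Fin n)) ℝ) ^ t) S₀ S)
          Filter.atTop (nhds (L T))) ∧
      Filter.Tendsto L (nhdsWithin 0 (Set.Ioi 0)) (nhds 1) := by
  refine ⟨fun T => ∑ S ∈ minCardFeasible A, gibbs (zcost A ε) T S, fun T _ => ?_, ?_⟩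
  · exact tendsto_finsetSum _ fun S _ => tendsto_metropolis_pow_apply (zcost A ε) T S₀ S
  · rw [minCardFeasible_eq_argmin_zcost A hε]
    exact tendsto_sum_gibbs_argmin (zcost A ε)

/-- for every initial state `S₀`,
`lim_{T→0⁺} lim_{t→∞} Σ_{S ∈ 𝒮*} (P_T^t)(S₀, S) = 1`, where `𝒮*` is the
collection of feasible sets of minimum cardinality: for large time and small
temperature the MCMC chain is, with probability approaching 1, at a
minimum-cardinality feasible set. -/
theorem mcmc_converges_to_optimal {n : ℕ} (hn : 1 ≤ n) (A : Fin n → Fin n → Prop)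
    (ε : ℝ) (hε : 0 < ε) (S₀ : Finset (Fin n)) :
    ∃ L : ℝ → ℝ,
      (∀ T : ℝ, 0 < T →
        Filter.Tendsto
          (fun t : ℕ =>
            ∑ S ∈ univ.filter (fun S : Finset (Fin n) =>
                Feasible A S ∧ ∀ S' : Finset (Fin n), Feasible A S' → S.card ≤ S'.card),
              (((Matrix.of fun S₁ S₂ => Ptrans (zcost A ε) T S₁ S₂) :
                Matrix (Finset (Fin n)) (Finset (Fin n)) ℝ) ^ t) S₀ S)
          Filter.atTop (nhds (L T))) ∧
      Filter.Tendsto L (nhdsWithin 0 (Set.Ioi 0)) (nhds 1) :=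
  mcmc_converges_to_optimal_general A ε hε S₀
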